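/- arXiv:2302.13888 — 2 statements merged into one kernel-verified Lean document; each statement's English description precedes it below -/
import Mathlib

section
/- Every MCDT-stable outcome of a k-Prize Weighted Voting Game is Pareto-optimal, and this remains true when the set of feasible outcomes is extended to allow transfers between coalitions, i.e., when an outcome is any pair (π, x) with π a partition of N and x a vector of nonnegative payoffs satisfying Σ_{i∈N} x_i = Σ_{j=1}^{min(|π|,k)} p_j: every MCDT-stable extended outcome is Pareto-optimal with respect to the extended set of outcomes. -/
open Finset
open scoped Classical

/-- A `k`-Prize Weighted Voting Game with `n` players `{0, ..., n-1}`: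
weights, prize values in descending order, and a strict total order `pref` (`≻`)
on coalitions that refines the comparison of total weights. -/
structure kWVG (n k : ℕ) : Type where
  /-- the weights of the players -/
  w : Fin n → ℚ
  w_pos : ∀ i, 0 < w i
  /-- the prize values, in descending order -/
  p : Fin k → ℚ
  p_pos : ∀ j, 0 < p j
  p_desc : ∀ j j' : Fin k, j ≤ j' → p j' ≤ p j
  k_pos : 0 < k
  k_le_n : k ≤ n
  /-- the strict total order `≻` on coalitions (tie-breaking order) -/
  pref : Finset (Fin n) → Finset (Fin n) → Prop
  pref_irrefl : ∀ A, ¬ pref A A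
  pref_trans : ∀ A B C, pref A B → pref B C → pref A C
  pref_total : ∀ A B, A ≠ B → pref A B ∨ pref B A
  pref_weight : ∀ A B, (∑ i ∈ B, w i) < (∑ i ∈ A, w i) → pref A B

variable {n k : ℕ}

/-- `π` is a partition of `D` into nonempty pairwise disjoint coalitions. -/
def IsPartition (π : Finset (Finset (Fin n))) (D : Finset (Fin n)) : Prop :=
  (∀ C ∈ π, C.Nonempty) ∧
  (∀ A ∈ π, ∀ B ∈ π, A ≠ B → Disjoint A B) ∧
  π.sup id = D

/-- The value `v(C, π)` of coalition `C` in the partition `π`: if `r` is the number of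
coalitions of `π` that are `≻`-larger than `C` (so that `C` is the `(r+1)`-st largest
coalition of `π`), then `C` gets the `(r+1)`-st prize if `r < k`, and `0` otherwise. -/
noncomputable def coalitionValue (G : kWVG n k) (π : Finset (Finset (Fin n)))
    (C : Finset (Fin n)) : ℚ :=
  if h : (π.filter (fun C' => G.pref C' C)).card < k then
    G.p ⟨(π.filter (fun C' => G.pref C' C)).card, h⟩
  else 0

/-- An outcome of the game `G`: a partition of all the players together with
nonnegative payoffs, where each coalition's payoffs sum to its value. -/
structure Outcome (G : kWVG n k) : Type where
  part : Finset (Finset (Fin n))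
  ispart : IsPartition part Finset.univ
  x : Fin n → ℚ
  x_nonneg : ∀ i, 0 ≤ x i
  x_budget : ∀ C ∈ part, ∑ i ∈ C, x i = coalitionValue G part C

/-- A single-coalition deviation (SCD) from an outcome with payoffs `x`. -/
def IsSCD (G : kWVG n k) (x : Fin n → ℚ) (C : Finset (Fin n)) : Prop :=
  C.Nonempty ∧
  ∀ π', IsPartition π' Finset.univ → C ∈ π' → (∑ i ∈ C, x i) < coalitionValue G π' C

/-- A deviating partition: a nonempty family of nonempty, pairwise disjoint coalitions
(that is, a partition of the nonempty set `D := πD.sup id ⊆ N` of deviators). -/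
def IsDevPartition (πD : Finset (Finset (Fin n))) : Prop :=
  πD.Nonempty ∧ (∀ C ∈ πD, C.Nonempty) ∧ (∀ A ∈ πD, ∀ B ∈ πD, A ≠ B → Disjoint A B)

/-- A multi-coalition deviation (MCD) from an outcome with payoffs `x`. -/
def IsMCD (G : kWVG n k) (x : Fin n → ℚ) (πD : Finset (Finset (Fin n))) : Prop :=
  IsDevPartition πD ∧
  ∀ π', IsPartition π' Finset.univ → πD ⊆ π' →
    ∀ C ∈ πD, (∑ i ∈ C, x i) < coalitionValue G π' C

/-- A weak multi-coalition deviation (wMCD) from an outcome with payoffs `x`. -/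
def IswMCD (G : kWVG n k) (x : Fin n → ℚ) (πD : Finset (Finset (Fin n))) : Prop :=
  IsDevPartition πD ∧
  ∀ π', IsPartition π' Finset.univ → πD ⊆ π' →
    (∀ C ∈ πD, (∑ i ∈ C, x i) ≤ coalitionValue G π' C) ∧
    (∃ C ∈ πD, (∑ i ∈ C, x i) < coalitionValue G π' C)

/-- A multi-coalition deviation with inter-coalition transfer (MCDT) from an outcome
with payoffs `x`. -/
def IsMCDT (G : kWVG n k) (x : Fin n → ℚ) (πD : Finset (Finset (Fin n))) : Prop :=
  IsDevPartition πD ∧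
  ∀ π', IsPartition π' Finset.univ → πD ⊆ π' →
    (∑ i ∈ πD.sup id, x i) < ∑ C ∈ πD, coalitionValue G π' C

/-- An outcome is SCD-stable if no SCD from it exists. -/
def SCDStable (G : kWVG n k) (ω : Outcome G) : Prop := ¬ ∃ C, IsSCD G ω.x C

/-- An outcome is MCD-stable if no MCD from it exists. -/
def MCDStable (G : kWVG n k) (ω : Outcome G) : Prop := ¬ ∃ πD, IsMCD G ω.x πD

/-- An outcome is wMCD-stable if no wMCD from it exists. -/
def wMCDStable (G : kWVG n k) (ω : Outcome G) : Prop := ¬ ∃ πD, IswMCD G ω.x πD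

/-- An outcome is MCDT-stable if no MCDT from it exists. -/
def MCDTStable (G : kWVG n k) (ω : Outcome G) : Prop := ¬ ∃ πD, IsMCDT G ω.x πD

/-- An outcome is Pareto-optimal if no outcome makes some player strictly better off
and no player worse off. -/
def ParetoOptimal (G : kWVG n k) (ω : Outcome G) : Prop :=
  ¬ ∃ ω' : Outcome G, (∀ i, ω.x i ≤ ω'.x i) ∧ (∃ j, ω.x j < ω'.x j)

/-- An outcome is utilitarian if no outcome achieves a strictly larger total payoff. -/
def Utilitarian (G : kWVG n k) (ω : Outcome G) : Prop :=
  ¬ ∃ ω' : Outcome G, (∑ i, ω.x i) < ∑ i, ω'.x i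

/-- An extended outcome: a partition of all players together with nonnegative payoffs
whose total equals the sum of the first `min(|π|, k)` prizes (so transfers between
coalitions are permitted). -/
structure ExtOutcome (G : kWVG n k) : Type where
  part : Finset (Finset (Fin n))
  ispart : IsPartition part Finset.univ
  x : Fin n → ℚ
  x_nonneg : ∀ i, 0 ≤ x i
  x_budget : (∑ i, x i) = ∑ j ∈ Finset.univ.filter (fun j : Fin k => (j : ℕ) < part.card), G.p j

/-- An extended outcome is Pareto-optimal with respect to the extended set of feasible
outcomes if no extended outcome makes some player strictly better off and none worse off. -/
def ExtParetoOptimal (G : kWVG n k) (ω : ExtOutcome G) : Prop :=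
  ¬ ∃ ω' : ExtOutcome G, (∀ i, ω.x i ≤ ω'.x i) ∧ (∃ j, ω.x j < ω'.x j)


noncomputable def gval (G : kWVG n k) (r : ℕ) : ℚ :=
  if h : r < k then G.p ⟨r, h⟩ else 0

lemma gval_sum (G : kWVG n k) (m : ℕ) :
    ∑ r ∈ Finset.range m, gval G r
      = ∑ j ∈ Finset.univ.filter (fun j : Fin k => (j : ℕ) < m), G.p j := by
  set h : ℕ → ℚ := fun r => if r < m then gval G r else 0 with hh
  have h1 : ∑ r ∈ Finset.range m, gval G r = ∑ r ∈ Finset.range m, h r :=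
    Finset.sum_congr rfl (fun r hr => by simp [hh, Finset.mem_range.mp hr])
  have h2 : ∑ r ∈ Finset.range m, h r = ∑ r ∈ Finset.range (max m k), h r :=
    Finset.sum_subset (Finset.range_subset_range.2 (le_max_left _ _)) (fun r _ hr => by
      have : ¬ r < m := fun hc => hr (Finset.mem_range.2 hc)
      simp [hh, this])
  have h3 : ∑ r ∈ Finset.range k, h r = ∑ r ∈ Finset.range (max m k), h r :=
    Finset.sum_subset (Finset.range_subset_range.2 (le_max_right _ _)) (fun r _ hr => by
      have : ¬ r < k := fun hc => hr (Finset.mem_range.2 hc)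
      simp [hh, gval, this])
  have h4 : ∑ j ∈ Finset.univ.filter (fun j : Fin k => (j : ℕ) < m), G.p j
      = ∑ r ∈ Finset.range k, h r := by
    rw [Finset.sum_filter, ← Fin.sum_univ_eq_sum_range h k]
    refine Finset.sum_congr rfl fun j _ => ?_
    simp [hh, gval, j.isLt]
  rw [h1, h2, h4, h3]

lemma rank_mono (G : kWVG n k) {π : Finset (Finset (Fin n))} {A B : Finset (Fin n)}
    (hA : A ∈ π) (hAB : G.pref A B) :
    (π.filter fun C' => G.pref C' A).card < (π.filter fun C' => G.pref C' B).card := by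
  apply Finset.card_lt_card
  rw [Finset.ssubset_iff_of_subset]
  · refine ⟨A, ?_, ?_⟩
    · simp only [Finset.mem_filter]; exact ⟨hA, hAB⟩
    · simp only [Finset.mem_filter, not_and]
      exact fun _ => G.pref_irrefl A
  · intro C hC
    simp only [Finset.mem_filter] at hC ⊢
    exact ⟨hC.1, G.pref_trans _ _ _ hC.2 hAB⟩

lemma rank_image (G : kWVG n k) (π : Finset (Finset (Fin n))) :
    π.image (fun C => (π.filter fun C' => G.pref C' C).card) = Finset.range π.card := by
  have hinj : ∀ A ∈ π, ∀ B ∈ π,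
      (π.filter fun C' => G.pref C' A).card = (π.filter fun C' => G.pref C' B).card → A = B := by
    intro A hA B hB hEq
    by_contra hne
    rcases G.pref_total A B hne with hp | hp
    · exact absurd hEq (Nat.ne_of_lt (rank_mono G hA hp))
    · exact absurd hEq.symm (Nat.ne_of_lt (rank_mono G hB hp))
  have hsub : π.image (fun C => (π.filter fun C' => G.pref C' C).card) ⊆ Finset.range π.card := by
    intro r hr
    rw [Finset.mem_image] at hr
    obtain ⟨C, hC, rfl⟩ := hr
    rw [Finset.mem_range]
    apply Finset.card_lt_card
    rw [Finset.ssubset_iff_of_subset (Finset.filter_subset _ _)]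
    refine ⟨C, hC, ?_⟩
    simp only [Finset.mem_filter, not_and]
    exact fun _ => G.pref_irrefl C
  refine Finset.eq_of_subset_of_card_le hsub ?_
  rw [Finset.card_range, Finset.card_image_of_injOn hinj]

lemma sum_coalitionValue (G : kWVG n k) (π : Finset (Finset (Fin n))) :
    ∑ C ∈ π, coalitionValue G π C
      = ∑ j ∈ Finset.univ.filter (fun j : Fin k => (j : ℕ) < π.card), G.p j := by
  have hinj : ∀ A ∈ π, ∀ B ∈ π,
      (π.filter fun C' => G.pref C' A).card = (π.filter fun C' => G.pref C' B).card → A = B := by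
    intro A hA B hB hEq
    by_contra hne
    rcases G.pref_total A B hne with hp | hp
    · exact absurd hEq (Nat.ne_of_lt (rank_mono G hA hp))
    · exact absurd hEq.symm (Nat.ne_of_lt (rank_mono G hB hp))
  have hcv : ∑ C ∈ π, coalitionValue G π C
      = ∑ C ∈ π, gval G ((π.filter fun C' => G.pref C' C).card) :=
    Finset.sum_congr rfl fun C _ => rfl
  rw [hcv, ← Finset.sum_image (g := fun C => (π.filter fun C' => G.pref C' C).card)
    (f := gval G) hinj, rank_image, gval_sum]

lemma sum_over_partition {π : Finset (Finset (Fin n))} (hπ : IsPartition π Finset.univ)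
    (f : Fin n → ℚ) : ∑ i, f i = ∑ C ∈ π, ∑ i ∈ C, f i := by
  obtain ⟨hne, hdisj, hsup⟩ := hπ
  have huniv : (Finset.univ : Finset (Fin n)) = π.biUnion id := by
    rw [← Finset.sup_eq_biUnion, hsup]
  have hbu := Finset.sum_biUnion (s := π) (t := fun A => A) (f := f)
    (fun A hA B hB hAB => hdisj A hA B hB hAB)
  rw [huniv]
  exact hbu

lemma mcdt_of_lt (G : kWVG n k) (x : Fin n → ℚ) {π' : Finset (Finset (Fin n))}
    (hπ' : IsPartition π' Finset.univ) (hne : (Finset.univ : Finset (Fin n)).Nonempty)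
    (hlt : ∑ i, x i < ∑ C ∈ π', coalitionValue G π' C) : IsMCDT G x π' := by
  obtain ⟨hCne, hdisj, hsup⟩ := hπ'
  refine ⟨⟨?_, hCne, hdisj⟩, ?_⟩
  · rcases hne with ⟨i, _⟩
    rcases Finset.eq_empty_or_nonempty π' with h | h
    · exfalso
      rw [h] at hsup
      simp only [Finset.sup_empty] at hsup
      have : i ∈ (⊥ : Finset (Fin n)) := hsup ▸ Finset.mem_univ i
      simp at this
    · exact h
  · intro π'' hπ'' hsub
    have heq : π'' = π' := by
      obtain ⟨hne2, hdisj2, hsup2⟩ := hπ''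
      apply Finset.Subset.antisymm _ hsub
      intro C hC
      by_contra hCnot
      obtain ⟨i, hi⟩ := hne2 C hC
      have hi2 : i ∈ π'.sup id := by rw [hsup]; exact Finset.mem_univ i
      rw [Finset.mem_sup] at hi2
      obtain ⟨B, hB, hiB⟩ := hi2
      have hBπ'' : B ∈ π'' := hsub hB
      have hd : Disjoint C B := hdisj2 C hC B hBπ'' (fun h => hCnot (h ▸ hB))
      exact Finset.disjoint_left.mp hd hi hiB
    rw [heq, hsup]
    exact hlt

/-- Every MCDT-stable outcome is Pareto-optimal, and this remains true when the set of
feasible outcomes is extended to allow transfers between coalitions. -/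
theorem MCDT_stable_implies_pareto (n k : ℕ) (G : kWVG n k) :
    (∀ ω : Outcome G, MCDTStable G ω → ParetoOptimal G ω) ∧
    (∀ ω : ExtOutcome G, (¬ ∃ πD, IsMCDT G ω.x πD) → ExtParetoOptimal G ω) := by
  constructor
  · intro ω hst hbad
    obtain ⟨ω', hle, j, hj⟩ := hbad
    apply hst
    refine ⟨ω'.part, mcdt_of_lt G ω.x ω'.ispart ⟨j, Finset.mem_univ j⟩ ?_⟩
    have hsum : ∑ i, ω.x i < ∑ i, ω'.x i :=
      Finset.sum_lt_sum (fun i _ => hle i) ⟨j, Finset.mem_univ j, hj⟩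
    have h2 : ∑ i, ω'.x i = ∑ C ∈ ω'.part, coalitionValue G ω'.part C := by
      rw [sum_over_partition ω'.ispart]
      exact Finset.sum_congr rfl fun C hC => ω'.x_budget C hC
    linarith
  · intro ω hst hbad
    obtain ⟨ω', hle, j, hj⟩ := hbad
    apply hst
    refine ⟨ω'.part, mcdt_of_lt G ω.x ω'.ispart ⟨j, Finset.mem_univ j⟩ ?_⟩
    have hsum : ∑ i, ω.x i < ∑ i, ω'.x i :=
      Finset.sum_lt_sum (fun i _ => hle i) ⟨j, Finset.mem_univ j, hj⟩
    have h2 := ω'.x_budget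
    rw [sum_coalitionValue]
    linarith
end

section
/- Let N be a finite set of players of a k-WVG, let 2 ≤ l ≤ |N|, let φ be a maximin share (MMS) partition of N into l sets, and let S ∈ φ be a set of φ other than the ≻-smallest set MMS(N, l). Then MMS(N, l) = MMS(N∖S, l−1), i.e., the smallest set of any MMS partition of N into l sets equals the smallest set of any MMS partition of N∖S into l−1 sets. -/
open Finset
open scoped Classical

variable {n k : ℕ}

/-- `C` is the `≻`-smallest set of the partition `π`. -/
def IsMinOf (G : kWVG n k) (π : Finset (Finset (Fin n))) (C : Finset (Fin n)) : Prop :=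
  C ∈ π ∧ ∀ C' ∈ π, C' ≠ C → G.pref C' C

/-- `φ` is a maximin share (MMS) partition of `X` into `l` sets: a partition of `X`
into `l` sets whose `≻`-smallest set is `≻`-maximal among the `≻`-smallest sets of all
partitions of `X` into `l` sets.  All MMS partitions of `X` into `l` sets have the same
`≻`-smallest set, called `MMS(X, l)`. -/
def IsMMSPartition (G : kWVG n k) (X : Finset (Fin n)) (l : ℕ)
    (φ : Finset (Finset (Fin n))) : Prop :=
  IsPartition φ X ∧ φ.card = l ∧
  ∀ ψ, IsPartition ψ X → ψ.card = l →
    ∀ Cφ Cψ, IsMinOf G φ Cφ → IsMinOf G ψ Cψ → Cφ = Cψ ∨ G.pref Cφ Cψ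

/-- If `φ` is an MMS partition of `N` into `l` sets and `S ∈ φ` is not its `≻`-smallest
set `M = MMS(N, l)`, then `MMS(N \ S, l - 1) = M`: the `≻`-smallest set of any MMS
partition of `N \ S` into `l - 1` sets is `M`. -/
theorem mms_reduction (n k : ℕ) (G : kWVG n k) (l : ℕ) (hl : 2 ≤ l) (hln : l ≤ n)
    (φ : Finset (Finset (Fin n))) (hφ : IsMMSPartition G Finset.univ l φ)
    (M : Finset (Fin n)) (hM : IsMinOf G φ M)
    (S : Finset (Fin n)) (hS : S ∈ φ) (hSM : S ≠ M) :
    ∀ ψ, IsMMSPartition G (Finset.univ \ S) (l - 1) ψ →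
      ∀ M', IsMinOf G ψ M' → M' = M := by
  intro ψ hψ M' hM'
  obtain ⟨⟨hφne, hφdisj, hφsup⟩, hφcard, hφmms⟩ := hφ
  obtain ⟨⟨hψne, hψdisj, hψsup⟩, hψcard, hψmms⟩ := hψ
  obtain ⟨hMφ, hMmin⟩ := hM
  obtain ⟨hM'ψ, hM'min⟩ := hM'
  -- `φ.erase S` is a partition of `univ \ S` into `l - 1` sets with min `M`.
  have herase_part : IsPartition (φ.erase S) (Finset.univ \ S) := by
    refine ⟨fun C hC => hφne C (Finset.mem_of_mem_erase hC),
      fun A hA B hB hAB => hφdisj A (Finset.mem_of_mem_erase hA) B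
        (Finset.mem_of_mem_erase hB) hAB, ?_⟩
    apply le_antisymm
    · refine Finset.sup_le fun C hC => ?_
      intro x hx
      simp only [Finset.mem_sdiff, Finset.mem_univ, true_and]
      intro hxS
      exact (Finset.disjoint_left.mp
        (hφdisj C (Finset.mem_of_mem_erase hC) S hS (Finset.ne_of_mem_erase hC)) hx) hxS
    · intro x hx
      simp only [Finset.mem_sdiff, Finset.mem_univ, true_and] at hx
      have hxu : x ∈ φ.sup id := by rw [hφsup]; exact Finset.mem_univ x
      obtain ⟨C, hC, hxC⟩ := Finset.mem_sup.mp hxu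
      exact Finset.mem_sup.mpr ⟨C, Finset.mem_erase.mpr ⟨fun h => hx (h ▸ hxC), hC⟩, hxC⟩
  have herase_card : (φ.erase S).card = l - 1 := by
    rw [Finset.card_erase_of_mem hS, hφcard]
  have herase_min : IsMinOf G (φ.erase S) M :=
    ⟨Finset.mem_erase.mpr ⟨Ne.symm hSM, hMφ⟩,
      fun C' hC' hne => hMmin C' (Finset.mem_of_mem_erase hC') hne⟩
  rcases hψmms (φ.erase S) herase_part herase_card M' M ⟨hM'ψ, hM'min⟩ herase_min with
    heq | hpref
  · exact heq
  -- Now derive a contradiction from `pref M' M`.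
  exfalso
  have hSne : S.Nonempty := hφne S hS
  have hSnψ : S ∉ ψ := by
    intro hSψ
    obtain ⟨x, hx⟩ := hSne
    have : x ∈ ψ.sup id := Finset.mem_sup.mpr ⟨S, hSψ, hx⟩
    rw [hψsup] at this
    exact (Finset.mem_sdiff.mp this).2 hx
  have hsubS : ∀ C ∈ ψ, Disjoint S C := by
    intro C hC
    rw [Finset.disjoint_right]
    intro x hxC
    have : x ∈ ψ.sup id := Finset.mem_sup.mpr ⟨C, hC, hxC⟩
    rw [hψsup] at this
    exact (Finset.mem_sdiff.mp this).2
  have hins_part : IsPartition (insert S ψ) Finset.univ := by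
    refine ⟨?_, ?_, ?_⟩
    · intro C hC
      rcases Finset.mem_insert.mp hC with h | h
      · exact h ▸ hSne
      · exact hψne C h
    · intro A hA B hB hAB
      rcases Finset.mem_insert.mp hA with hA' | hA' <;>
        rcases Finset.mem_insert.mp hB with hB' | hB'
      · exact absurd (hA'.trans hB'.symm) hAB
      · exact hA' ▸ hsubS B hB'
      · exact (hB' ▸ hsubS A hA').symm
      · exact hψdisj A hA' B hB' hAB
    · rw [Finset.sup_insert, hψsup]
      simp [Finset.union_sdiff_of_subset (Finset.subset_univ S)]
  have hins_card : (insert S ψ).card = l := by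
    rw [Finset.card_insert_of_notMem hSnψ, hψcard]
    omega
  have hSM' : S ≠ M' := by
    intro h
    obtain ⟨x, hx⟩ := hψne M' hM'ψ
    exact Finset.disjoint_right.mp (hsubS M' hM'ψ) hx (h ▸ hx)
  have hprefSM : G.pref S M := hMmin S hS hSM
  rcases G.pref_total S M' hSM' with hc | hc
  · -- min of `insert S ψ` is `M'`
    have hins_min : IsMinOf G (insert S ψ) M' := by
      refine ⟨Finset.mem_insert_of_mem hM'ψ, fun C' hC' hne => ?_⟩
      rcases Finset.mem_insert.mp hC' with h | h
      · exact h ▸ hc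
      · exact hM'min C' h hne
    rcases hφmms (insert S ψ) hins_part hins_card M M' ⟨hMφ, hMmin⟩ hins_min with h | h
    · exact G.pref_irrefl M (h ▸ hpref)
    · exact G.pref_irrefl M (G.pref_trans M M' M h hpref)
  · -- min of `insert S ψ` is `S`
    have hins_min : IsMinOf G (insert S ψ) S := by
      refine ⟨Finset.mem_insert_self S ψ, fun C' hC' hne => ?_⟩
      rcases Finset.mem_insert.mp hC' with h | h
      · exact absurd h hne
      · by_cases hCM : C' = M'
        · exact hCM ▸ hc
        · exact G.pref_trans C' M' S (hM'min C' h hCM) hc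
    rcases hφmms (insert S ψ) hins_part hins_card M S ⟨hMφ, hMmin⟩ hins_min with h | h
    · exact hSM h.symm
    · exact G.pref_irrefl M (G.pref_trans M S M h hprefSM)
end
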